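/- For every n ≥ 0 there exists an injective kG-module homomorphism from V_{−(2n+1)} into the free module (kG)^{n+1} whose cokernel is isomorphic as a kG-module to V_{−(2n+3)}. -/

import Mathlib

/-- The Klein four-group `G = C₂ × C₂`. -/
abbrev K4 : Type := Multiplicative (ZMod 2 × ZMod 2)

/-- The generator `σ` of the Klein four-group. -/
def sg : K4 := Multiplicative.ofAdd ((1 : ZMod 2), (0 : ZMod 2))

/-- The generator `τ` of the Klein four-group. -/
def tg : K4 := Multiplicative.ofAdd ((0 : ZMod 2), (1 : ZMod 2))

/-- The subgroup `H₁ = ⟨σ⟩`. -/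
def H1 : Subgroup K4 := Subgroup.zpowers sg

/-- The subgroup `H₂ = ⟨τ⟩`. -/
def H2 : Subgroup K4 := Subgroup.zpowers tg

/-- The subgroup `H₃ = ⟨στ⟩`. -/
def H3 : Subgroup K4 := Subgroup.zpowers (sg * tg)

/-- `V` carries the structure of the module `V_{-(2n+1)}`: the basis vector `B (Sum.inl i)`
is `a_{i+1}` (for `0 ≤ i ≤ n-1`) and `B (Sum.inr j)` is `b_j` (for `0 ≤ j ≤ n`), with
`X·aᵢ = b_{i-1}`, `Y·aᵢ = bᵢ`, `X·bⱼ = Y·bⱼ = 0`, i.e. (with `σ = 1 + X`, `τ = 1 + Y`)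
`σ·aᵢ = aᵢ + b_{i-1}`, `τ·aᵢ = aᵢ + bᵢ`, and `σ, τ` fix the `bⱼ`. -/
def IsVneg (k : Type) [Field k] (n : ℕ) (V : Type) [AddCommGroup V] [Module k V]
    [DistribMulAction K4 V] (B : Module.Basis (Fin n ⊕ Fin (n + 1)) k V) : Prop :=
  (∀ i : Fin n, sg • B (Sum.inl i) = B (Sum.inl i) + B (Sum.inr i.castSucc)) ∧
  (∀ i : Fin n, tg • B (Sum.inl i) = B (Sum.inl i) + B (Sum.inr i.succ)) ∧
  (∀ j : Fin (n + 1), sg • B (Sum.inr j) = B (Sum.inr j)) ∧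
  (∀ j : Fin (n + 1), tg • B (Sum.inr j) = B (Sum.inr j))

/-!
Identify `kG` with `G → k`, a function `φ` standing for `∑ g, φ g • g`. In characteristic 2,
`X = 1 + σ`, `Y = 1 + τ` and `XY` are the indicator functions of `{1, σ}`, `{1, τ}` and `G`.
Write `aᵢ = B (.inl i)` and `bⱼ = B (.inr j)`, so that `X aᵢ = bᵢ` and `Y aᵢ = bᵢ₊₁`, and `eⱼ`
for the free generators. As `X² = Y² = 0`, `X (Y eᵢ + X eᵢ₊₁) = XY eᵢ` and
`Y (Y eᵢ + X eᵢ₊₁) = XY eᵢ₊₁`, so `aᵢ ↦ Y eᵢ + X eᵢ₊₁`, `bⱼ ↦ XY eⱼ` is `kG`-linear; it has a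
`k`-linear retraction, so it is injective. The `kG`-linear map `eⱼ ↦ aⱼ` onto `V_{-(2n+3)}` is
surjective, since `bⱼ = X aⱼ` and `bₙ₊₁ = Y aₙ`, and it kills the image of the first map, since
`Y aᵢ = bᵢ₊₁ = X aᵢ₊₁` and `XY aⱼ = 0`. Exactness follows from
`dim (kG)^{n+1} = 4n + 4 = (2n + 1) + (2n + 3)`.
-/

section LinearCombination₂

variable {R G ι M : Type*} [CommSemiring R] [AddCommMonoid M] [Module R M] [Fintype ι]
  [Fintype G]

def linearCombination₂ (w : ι → G → M) : (ι → G → R) →ₗ[R] M where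
  toFun F := ∑ i, ∑ g, F i g • w i g
  map_add' F F' := by simp only [Pi.add_apply, add_smul, Finset.sum_add_distrib]
  map_smul' c F := by simp only [Pi.smul_apply, smul_eq_mul, mul_smul, Finset.smul_sum,
    RingHom.id_apply]

lemma linearCombination₂_apply (w : ι → G → M) (F : ι → G → R) :
    linearCombination₂ w F = ∑ i, ∑ g, F i g • w i g := rfl

lemma linearCombination₂_single [DecidableEq ι] (w : ι → G → M) (j : ι) (φ : G → R) :
    linearCombination₂ w (Pi.single j φ) = ∑ g, φ g • w j g := by
  rw [linearCombination₂_apply, Fintype.sum_eq_single j fun i hi => by simp [hi]]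
  simp

end LinearCombination₂

section RegularRepresentation

variable {R G ι : Type*} [CommSemiring R] [Group G]

def leftTranslate (g : G) : (ι → G → R) →ₗ[R] (ι → G → R) where
  toFun F i x := F i (g⁻¹ * x)
  map_add' _ _ := rfl
  map_smul' _ _ := rfl

@[simp]
lemma leftTranslate_apply (g : G) (F : ι → G → R) (i : ι) (x : G) :
    leftTranslate g F i x = F i (g⁻¹ * x) := rfl

lemma leftTranslate_one (F : ι → G → R) : leftTranslate 1 F = F := by
  ext; simp

lemma leftTranslate_mul (g h : G) (F : ι → G → R) :
    leftTranslate (g * h) F = leftTranslate g (leftTranslate h F) := by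
  ext; simp [mul_assoc]

lemma leftTranslate_single [DecidableEq ι] (g : G) (j : ι) (φ : G → R) :
    leftTranslate g (Pi.single j φ) = Pi.single j (fun x => φ (g⁻¹ * x)) := by
  ext i x
  rcases eq_or_ne i j with rfl | h
  · simp
  · simp [h]

variable {M : Type*} [AddCommMonoid M] [Module R M] [DistribMulAction G M] [Fintype ι]
  [Fintype G]

/-- The `RG`-linear map `(RG)^ι → M` sending the `i`-th standard generator to `m i`. -/
def freeLift (m : ι → M) : (ι → G → R) →ₗ[R] M :=
  linearCombination₂ fun i g => g • m i

lemma freeLift_single [DecidableEq ι] (m : ι → M) (j : ι) (φ : G → R) :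
    freeLift m (Pi.single j φ) = ∑ g, φ g • g • m j :=
  linearCombination₂_single _ j φ

lemma freeLift_leftTranslate [SMulCommClass G R M] (m : ι → M) (g : G) (F : ι → G → R) :
    freeLift m (leftTranslate g F) = g • freeLift m F := by
  simp only [freeLift, linearCombination₂_apply, leftTranslate_apply, Finset.smul_sum,
    smul_comm g, ← mul_smul]
  refine Fintype.sum_congr _ _ fun i => ?_
  rw [← Equiv.sum_comp (Equiv.mulLeft g)]
  simp

lemma mem_range_freeLift [DecidableEq ι] (m : ι → M) (j : ι) :
    m j ∈ LinearMap.range (freeLift (R := R) (G := G) m) := by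
  classical
  exact ⟨Pi.single j (Pi.single 1 1), by
    rw [freeLift_single, Fintype.sum_eq_single 1 fun g hg => by simp [hg]]
    simp⟩

end RegularRepresentation

theorem LinearMap.ker_eq_range_of_finrank_eq {K U V W : Type*} [DivisionRing K]
    [AddCommGroup U] [Module K U] [AddCommGroup V] [Module K V] [AddCommGroup W] [Module K W]
    [FiniteDimensional K V] {f : U →ₗ[K] V} {g : V →ₗ[K] W} (hf : Function.Injective f)
    (hg : Function.Surjective g) (hgf : g ∘ₗ f = 0)
    (hdim : Module.finrank K V = Module.finrank K U + Module.finrank K W) :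
    LinearMap.ker g = LinearMap.range f := by
  have hker := LinearMap.finrank_range_add_finrank_ker g
  rw [LinearMap.range_eq_top.mpr hg, finrank_top] at hker
  refine (Submodule.eq_of_le_of_finrank_eq (LinearMap.range_le_ker_iff.mpr hgf) ?_).symm
  rw [LinearMap.finrank_range_of_inj hf]
  omega

lemma add_self_eq_zero_of_charTwo (k : Type*) {M : Type*} [Ring k] [CharP k 2] [AddCommGroup M]
    [Module k M] (w : M) : w + w = 0 := by
  rw [← two_smul k w, CharTwo.two_eq_zero, zero_smul]

namespace K4

lemma eq_one_or_eq_sg_or_eq_tg_or_eq_sg_mul_tg :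
    ∀ g : K4, g = 1 ∨ g = sg ∨ g = tg ∨ g = sg * tg := by
  decide

lemma sum_univ {M : Type*} [AddCommMonoid M] (f : K4 → M) :
    ∑ g : K4, f g = f 1 + f sg + f tg + f (sg * tg) := by
  rw [show (Finset.univ : Finset K4) = {1, sg, tg, sg * tg} from by decide,
    Finset.sum_insert (by decide), Finset.sum_insert (by decide),
    Finset.sum_insert (by decide), Finset.sum_singleton]
  abel

variable (k : Type*) [Field k]

def elemX : K4 → k := fun x => if x = 1 ∨ x = sg then 1 else 0

def elemY : K4 → k := fun x => if x = 1 ∨ x = tg then 1 else 0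

lemma elemX_comp_sg : (fun x => elemX k (sg⁻¹ * x)) = elemX k := by
  funext x
  rcases eq_one_or_eq_sg_or_eq_tg_or_eq_sg_mul_tg x with rfl | rfl | rfl | rfl <;>
    simp (config := { decide := true }) [elemX]

lemma elemY_comp_tg : (fun x => elemY k (tg⁻¹ * x)) = elemY k := by
  funext x
  rcases eq_one_or_eq_sg_or_eq_tg_or_eq_sg_mul_tg x with rfl | rfl | rfl | rfl <;>
    simp (config := { decide := true }) [elemY]

variable [CharP k 2]

lemma elemY_comp_sg : (fun x => elemY k (sg⁻¹ * x)) = elemY k + 1 := by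
  funext x
  rcases eq_one_or_eq_sg_or_eq_tg_or_eq_sg_mul_tg x with rfl | rfl | rfl | rfl <;>
    simp (config := { decide := true }) [elemY, CharTwo.add_self_eq_zero]

lemma elemX_comp_tg : (fun x => elemX k (tg⁻¹ * x)) = elemX k + 1 := by
  funext x
  rcases eq_one_or_eq_sg_or_eq_tg_or_eq_sg_mul_tg x with rfl | rfl | rfl | rfl <;>
    simp (config := { decide := true }) [elemX, CharTwo.add_self_eq_zero]

end K4

section FreeLift

open K4

variable {k : Type*} [Field k] {ι M : Type*} [Fintype ι] [DecidableEq ι] [AddCommMonoid M]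
  [Module k M] [DistribMulAction K4 M] (m : ι → M) (j : ι)

lemma freeLift_single_elemX : freeLift m (Pi.single j (elemX k)) = m j + sg • m j := by
  rw [freeLift_single, sum_univ]
  simp (config := { decide := true }) [elemX]

lemma freeLift_single_elemY : freeLift m (Pi.single j (elemY k)) = m j + tg • m j := by
  rw [freeLift_single, sum_univ]
  simp (config := { decide := true }) [elemY]

lemma freeLift_single_one :
    freeLift m (Pi.single j (1 : K4 → k)) = (m j + sg • m j) + tg • (m j + sg • m j) := by
  rw [freeLift_single, sum_univ]
  simp only [Pi.one_apply, one_smul, smul_add, ← mul_smul, mul_comm tg]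
  abel

end FreeLift

section Vneg

open K4

variable {k : Type} [Field k] {n : ℕ}
  {V : Type} [AddCommGroup V] [Module k V] (B : Module.Basis (Fin n ⊕ Fin (n + 1)) k V)

noncomputable def vnegEmbedding : V →ₗ[k] (Fin (n + 1) → K4 → k) :=
  B.constr k fun
    | .inl i => Pi.single i.castSucc (elemY k) + Pi.single i.succ (elemX k)
    | .inr j => Pi.single j 1

@[simp]
lemma vnegEmbedding_inl (i : Fin n) :
    vnegEmbedding B (B (.inl i)) = Pi.single i.castSucc (elemY k) + Pi.single i.succ (elemX k) :=
  B.constr_basis k _ _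

@[simp]
lemma vnegEmbedding_inr (j : Fin (n + 1)) : vnegEmbedding B (B (.inr j)) = Pi.single j 1 :=
  B.constr_basis k _ _

/-- Row `j` of `F` contributes its `τ`-coordinate times `aⱼ` and its `στ`-coordinate times
`bⱼ - aⱼ` (with `aₙ = 0`): the image of `aᵢ` has `τ`-coordinate `1` only in row `i` and no
`στ`-coordinates, that of `bⱼ` has all coordinates `1` in row `j`. -/
noncomputable def vnegRetraction : (Fin (n + 1) → K4 → k) →ₗ[k] V :=
  linearCombination₂ fun j g =>
    let a : V := Fin.lastCases 0 (fun i => B (.inl i)) j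
    if g = tg then a else if g = sg * tg then B (.inr j) - a else 0

lemma vnegRetraction_comp_vnegEmbedding :
    vnegRetraction B ∘ₗ vnegEmbedding B = LinearMap.id := by
  refine B.ext fun b => ?_
  rcases b with i | j
  · simp (config := { decide := true }) [vnegRetraction, linearCombination₂_single, sum_univ,
      elemX, elemY]
  · simp (config := { decide := true }) [vnegRetraction, linearCombination₂_single, sum_univ]

lemma vnegEmbedding_injective : Function.Injective (vnegEmbedding B) :=
  Function.LeftInverse.injective (g := vnegRetraction B) fun v =>
    LinearMap.congr_fun (vnegRetraction_comp_vnegEmbedding B) v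

variable {B} [DistribMulAction K4 V]

lemma IsVneg.add_sg_smul_inl [CharP k 2] (hV : IsVneg k n V B) (i : Fin n) :
    B (.inl i) + sg • B (.inl i) = B (.inr i.castSucc) := by
  rw [hV.1 i, ← add_assoc, add_self_eq_zero_of_charTwo k, zero_add]

lemma IsVneg.add_tg_smul_inl [CharP k 2] (hV : IsVneg k n V B) (i : Fin n) :
    B (.inl i) + tg • B (.inl i) = B (.inr i.succ) := by
  rw [hV.2.1 i, ← add_assoc, add_self_eq_zero_of_charTwo k, zero_add]

variable [SMulCommClass K4 k V] [CharP k 2]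

lemma vnegEmbedding_sg_smul (hV : IsVneg k n V B) (v : V) :
    vnegEmbedding B (sg • v) = leftTranslate sg (vnegEmbedding B v) := by
  refine LinearMap.congr_fun (B.ext (f₁ := vnegEmbedding B ∘ₗ DistribSMul.toLinearMap k V sg)
    (f₂ := leftTranslate sg ∘ₗ vnegEmbedding B) fun b => ?_) v
  rcases b with i | j
  · simp only [LinearMap.comp_apply, DistribSMul.toLinearMap_apply, hV.1 i, map_add,
      vnegEmbedding_inl, vnegEmbedding_inr, leftTranslate_single, elemX_comp_sg, elemY_comp_sg,
      Pi.single_add]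
    abel
  · simp [hV.2.2.1 j, leftTranslate_single, Pi.one_def]

lemma vnegEmbedding_tg_smul (hV : IsVneg k n V B) (v : V) :
    vnegEmbedding B (tg • v) = leftTranslate tg (vnegEmbedding B v) := by
  refine LinearMap.congr_fun (B.ext (f₁ := vnegEmbedding B ∘ₗ DistribSMul.toLinearMap k V tg)
    (f₂ := leftTranslate tg ∘ₗ vnegEmbedding B) fun b => ?_) v
  rcases b with i | j
  · simp only [LinearMap.comp_apply, DistribSMul.toLinearMap_apply, hV.2.1 i, map_add,
      vnegEmbedding_inl, vnegEmbedding_inr, leftTranslate_single, elemX_comp_tg, elemY_comp_tg,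
      Pi.single_add]
    abel
  · simp [hV.2.2.2 j, leftTranslate_single, Pi.one_def]

lemma vnegEmbedding_smul (hV : IsVneg k n V B) (g : K4) (v : V) :
    vnegEmbedding B (g • v) = leftTranslate g (vnegEmbedding B v) := by
  rcases eq_one_or_eq_sg_or_eq_tg_or_eq_sg_mul_tg g with rfl | rfl | rfl | rfl
  · rw [one_smul, leftTranslate_one]
  · exact vnegEmbedding_sg_smul hV v
  · exact vnegEmbedding_tg_smul hV v
  · rw [mul_smul, vnegEmbedding_sg_smul hV, vnegEmbedding_tg_smul hV, leftTranslate_mul]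

end Vneg

section Cokernel

open K4

variable {k : Type} [Field k] [CharP k 2] {n : ℕ}
  {W : Type} [AddCommGroup W] [Module k W] [DistribMulAction K4 W]
  {C : Module.Basis (Fin (n + 1) ⊕ Fin (n + 2)) k W}

lemma freeLift_comp_vnegEmbedding {V : Type} [AddCommGroup V] [Module k V]
    (B : Module.Basis (Fin n ⊕ Fin (n + 1)) k V) (hW : IsVneg k (n + 1) W C) :
    freeLift (fun j => C (.inl j)) ∘ₗ vnegEmbedding B = 0 := by
  refine B.ext fun b => ?_
  rcases b with i | j
  · rw [LinearMap.comp_apply, vnegEmbedding_inl, map_add, freeLift_single_elemX,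
      freeLift_single_elemY, hW.add_tg_smul_inl, hW.add_sg_smul_inl, Fin.succ_castSucc]
    exact add_self_eq_zero_of_charTwo k _
  · rw [LinearMap.comp_apply, vnegEmbedding_inr, freeLift_single_one, hW.add_sg_smul_inl,
      hW.2.2.2]
    exact add_self_eq_zero_of_charTwo k _

lemma freeLift_surjective (hW : IsVneg k (n + 1) W C) :
    Function.Surjective (freeLift (R := k) (G := K4) fun j => C (.inl j)) := by
  rw [← LinearMap.range_eq_top, eq_top_iff, ← C.span_eq, Submodule.span_le]
  rintro _ ⟨j | j, rfl⟩
  · exact mem_range_freeLift _ j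
  · induction j using Fin.lastCases with
    | last =>
      exact ⟨_, (freeLift_single_elemY _ _).trans (Fin.succ_last n ▸ hW.add_tg_smul_inl _)⟩
    | cast j => exact ⟨_, (freeLift_single_elemX _ j).trans (hW.add_sg_smul_inl j)⟩

end Cokernel

/-- For every `n ≥ 0` there is an injective `kG`-homomorphism from `V_{-(2n+1)}` into the
free module `(kG)^{n+1}` whose cokernel is isomorphic as a `kG`-module to `V_{-(2n+3)}`
(= `V_{-(2(n+1)+1)}`, realized by `W` via a surjective equivariant map `p` with
`ker p = range ι`). The free module is realized as `Fin (n+1) → (K4 → k)` with the left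
regular action `(g • F) i x = F i (g⁻¹x)`. -/
theorem stmt17 (k : Type) [Field k] [CharP k 2] (n : ℕ)
    (V : Type) [AddCommGroup V] [Module k V] [DistribMulAction K4 V] [SMulCommClass K4 k V]
    (BV : Module.Basis (Fin n ⊕ Fin (n + 1)) k V) (hV : IsVneg k n V BV)
    (W : Type) [AddCommGroup W] [Module k W] [DistribMulAction K4 W] [SMulCommClass K4 k W]
    (BW : Module.Basis (Fin (n + 1) ⊕ Fin (n + 2)) k W) (hW : IsVneg k (n + 1) W BW) :
    ∃ ι : V →ₗ[k] (Fin (n + 1) → K4 → k),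
      Function.Injective ι ∧
      (∀ (g : K4) (v : V), ι (g • v) = fun i x => ι v i (g⁻¹ * x)) ∧
      ∃ p : (Fin (n + 1) → K4 → k) →ₗ[k] W,
        Function.Surjective p ∧
        (∀ (g : K4) (F : Fin (n + 1) → K4 → k),
          p (fun i x => F i (g⁻¹ * x)) = g • p F) ∧
        LinearMap.ker p = LinearMap.range ι := by
  have hdim : Module.finrank k (Fin (n + 1) → K4 → k) =
      Module.finrank k V + Module.finrank k W := by
    simp [Module.finrank_pi_fintype, Module.finrank_eq_card_basis BV,
      Module.finrank_eq_card_basis BW]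
    omega
  refine ⟨vnegEmbedding BV, vnegEmbedding_injective BV, vnegEmbedding_smul hV,
    freeLift fun j => BW (.inl j), freeLift_surjective hW, freeLift_leftTranslate _,
    LinearMap.ker_eq_range_of_finrank_eq (vnegEmbedding_injective BV) (freeLift_surjective hW)
      (freeLift_comp_vnegEmbedding BV hW) hdim⟩
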